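/- arXiv:1302.5728 — 5 statements merged into one kernel-verified Lean document; each statement's English description precedes it below -/
import Mathlib

section
/- Let F be a field of characteristic 0 and let a0, a1, a2, a3 be elements of F. Then the cubic polynomial x^3 - a2*x^2 + (a1*a3 - 4*a0)*x + (4*a0*a2 - a1^2 - a0*a3^2) has the same discriminant as the quartic polynomial x^4 + a3*x^3 + a2*x^2 + a1*x + a0. (Moreover, if r1, r2, r3, r4 are the roots of the quartic in an algebraic closure of F, then the roots of the cubic are r1*r2 + r3*r4, r1*r3 + r2*r4, r1*r4 + r2*r3.) -/
set_option maxHeartbeats 1000000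


open Polynomial

/-- Let `F` be a field of characteristic `0` and `a0, a1, a2, a3 ∈ F`.
If `r1, r2, r3, r4` are the roots (in an algebraic closure of `F`) of the quartic
`x^4 + a3 x^3 + a2 x^2 + a1 x + a0`, then the roots of the cubic resolvent
`x^3 - a2 x^2 + (a1 a3 - 4 a0) x + (4 a0 a2 - a1^2 - a0 a3^2)` are
`r1 r2 + r3 r4`, `r1 r3 + r2 r4`, `r1 r4 + r2 r3`, and the cubic has the same
discriminant (the product over pairs of squared root differences) as the quartic. -/
theorem statement0 (F : Type*) [Field F] [CharZero F] (a0 a1 a2 a3 : F)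
    (r1 r2 r3 r4 : AlgebraicClosure F)
    (hquartic :
      Polynomial.map (algebraMap F (AlgebraicClosure F))
          (X ^ 4 + C a3 * X ^ 3 + C a2 * X ^ 2 + C a1 * X + C a0) =
        (X - C r1) * (X - C r2) * (X - C r3) * (X - C r4)) :
    Polynomial.map (algebraMap F (AlgebraicClosure F))
        (X ^ 3 - C a2 * X ^ 2 + C (a1 * a3 - 4 * a0) * X + C (4 * a0 * a2 - a1 ^ 2 - a0 * a3 ^ 2)) =
      (X - C (r1 * r2 + r3 * r4)) * (X - C (r1 * r3 + r2 * r4)) * (X - C (r1 * r4 + r2 * r3)) ∧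
    ((r1 * r2 + r3 * r4) - (r1 * r3 + r2 * r4)) ^ 2 *
        ((r1 * r2 + r3 * r4) - (r1 * r4 + r2 * r3)) ^ 2 *
        ((r1 * r3 + r2 * r4) - (r1 * r4 + r2 * r3)) ^ 2 =
      (r1 - r2) ^ 2 * (r1 - r3) ^ 2 * (r1 - r4) ^ 2 *
        (r2 - r3) ^ 2 * (r2 - r4) ^ 2 * (r3 - r4) ^ 2 := by
  set φ := algebraMap F (AlgebraicClosure F) with hφ
  have key : (X - C r1) * (X - C r2) * (X - C r3) * (X - C r4) =
      X ^ 4 + C (-(r1 + r2 + r3 + r4)) * X ^ 3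
        + C (r1*r2 + r1*r3 + r1*r4 + r2*r3 + r2*r4 + r3*r4) * X ^ 2
        + C (-(r1*r2*r3 + r1*r2*r4 + r1*r3*r4 + r2*r3*r4)) * X
        + C (r1*r2*r3*r4) := by
    simp only [map_neg, map_add, map_mul]; ring
  rw [key] at hquartic
  simp only [Polynomial.map_add, Polynomial.map_mul, Polynomial.map_pow, map_X, map_C] at hquartic
  have h3 := congrArg (fun p => p.coeff 3) hquartic
  have h2 := congrArg (fun p => p.coeff 2) hquartic
  have h1 := congrArg (fun p => p.coeff 1) hquartic
  have h0 := congrArg (fun p => p.coeff 0) hquartic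
  simp only [coeff_add, coeff_C_mul, coeff_X_pow, coeff_X, coeff_C, coeff_one] at h3 h2 h1 h0
  norm_num at h3 h2 h1 h0
  constructor
  · simp only [Polynomial.map_add, Polynomial.map_sub, Polynomial.map_mul, Polynomial.map_pow,
      map_X, map_C, Polynomial.map_ofNat, map_sub, map_mul, map_add, map_pow, map_ofNat]
    rw [h3, h2, h1, h0]
    simp only [map_neg, map_add, map_mul, map_sub, map_pow, map_ofNat]
    ring
  · ring
end

section
/- Let F be a field of characteristic 0, let a0, a1, a2 be elements of F, and let s be an element of F with s^2 = -a0. Then the discriminant of the quartic polynomial x^4 + 2*a2*x^2 - 8*s*x + (a2^2 - 4*a1) equals 2^12 times the discriminant of the cubic polynomial x^3 + a2*x^2 + a1*x + a0. -/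
open Polynomial

private lemma quartic_disc {K : Type*} [CommRing K] (r1 r2 r3 r4 : K)
    (h : r1 + r2 + r3 + r4 = 0) :
    (r1 - r2) ^ 2 * (r1 - r3) ^ 2 * (r1 - r4) ^ 2 *
        (r2 - r3) ^ 2 * (r2 - r4) ^ 2 * (r3 - r4) ^ 2 =
      16 * (r1*r2 + r1*r3 + r1*r4 + r2*r3 + r2*r4 + r3*r4) ^ 4 * (r1*r2*r3*r4)
      - 4 * (r1*r2 + r1*r3 + r1*r4 + r2*r3 + r2*r4 + r3*r4) ^ 3 *
          (r1*r2*r3 + r1*r2*r4 + r1*r3*r4 + r2*r3*r4) ^ 2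
      - 128 * (r1*r2 + r1*r3 + r1*r4 + r2*r3 + r2*r4 + r3*r4) ^ 2 * (r1*r2*r3*r4) ^ 2
      + 144 * (r1*r2 + r1*r3 + r1*r4 + r2*r3 + r2*r4 + r3*r4) *
          (r1*r2*r3 + r1*r2*r4 + r1*r3*r4 + r2*r3*r4) ^ 2 * (r1*r2*r3*r4)
      - 27 * (r1*r2*r3 + r1*r2*r4 + r1*r3*r4 + r2*r3*r4) ^ 4
      + 256 * (r1*r2*r3*r4) ^ 3 := by
  have hr4 : r4 = -(r1 + r2 + r3) := by linear_combination h
  subst hr4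
  ring

private lemma cubic_disc {K : Type*} [CommRing K] (t1 t2 t3 : K) :
    (t1 - t2) ^ 2 * (t1 - t3) ^ 2 * (t2 - t3) ^ 2 =
      (t1 + t2 + t3) ^ 2 * (t1*t2 + t1*t3 + t2*t3) ^ 2
      - 4 * (t1*t2 + t1*t3 + t2*t3) ^ 3
      - 4 * (t1 + t2 + t3) ^ 3 * (t1*t2*t3)
      + 18 * (t1 + t2 + t3) * (t1*t2 + t1*t3 + t2*t3) * (t1*t2*t3)
      - 27 * (t1*t2*t3) ^ 2 := by
  ring

/-- Let `F` be a field of characteristic `0`, `a0, a1, a2 ∈ F` and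
`s ∈ F` with `s^2 = -a0`.  Then the discriminant of the quartic
`x^4 + 2 a2 x^2 - 8 s x + (a2^2 - 4 a1)` equals `2^12` times the discriminant of the
cubic `x^3 + a2 x^2 + a1 x + a0`, where the discriminant of a monic polynomial is the
product over pairs of squared differences of its roots in an algebraic closure. -/
theorem statement1 (F : Type*) [Field F] [CharZero F] (a0 a1 a2 s : F)
    (hs : s ^ 2 = -a0)
    (r1 r2 r3 r4 t1 t2 t3 : AlgebraicClosure F)
    (hquartic :
      Polynomial.map (algebraMap F (AlgebraicClosure F))
          (X ^ 4 + C (2 * a2) * X ^ 2 - C (8 * s) * X + C (a2 ^ 2 - 4 * a1)) =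
        (X - C r1) * (X - C r2) * (X - C r3) * (X - C r4))
    (hcubic :
      Polynomial.map (algebraMap F (AlgebraicClosure F))
          (X ^ 3 + C a2 * X ^ 2 + C a1 * X + C a0) =
        (X - C t1) * (X - C t2) * (X - C t3)) :
    (r1 - r2) ^ 2 * (r1 - r3) ^ 2 * (r1 - r4) ^ 2 *
        (r2 - r3) ^ 2 * (r2 - r4) ^ 2 * (r3 - r4) ^ 2 =
      2 ^ 12 * ((t1 - t2) ^ 2 * (t1 - t3) ^ 2 * (t2 - t3) ^ 2) := by
  simp only [Polynomial.map_add, Polynomial.map_sub, Polynomial.map_mul,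
    Polynomial.map_pow, Polynomial.map_X, Polynomial.map_C] at hquartic hcubic
  have hexpq : (X - C r1) * (X - C r2) * (X - C r3) * (X - C r4) =
      X ^ 4 - C (r1 + r2 + r3 + r4) * X ^ 3
        + C (r1*r2 + r1*r3 + r1*r4 + r2*r3 + r2*r4 + r3*r4) * X ^ 2
        - C (r1*r2*r3 + r1*r2*r4 + r1*r3*r4 + r2*r3*r4) * X
        + C (r1*r2*r3*r4) := by
    simp only [map_add, map_mul]
    ring
  have hexpc : (X - C t1) * (X - C t2) * (X - C t3) =
      X ^ 3 - C (t1 + t2 + t3) * X ^ 2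
        + C (t1*t2 + t1*t3 + t2*t3) * X - C (t1*t2*t3) := by
    simp only [map_add, map_mul]
    ring
  rw [hexpq] at hquartic
  rw [hexpc] at hcubic
  have hq3 := congrArg (fun p => Polynomial.coeff p 3) hquartic
  have hq2 := congrArg (fun p => Polynomial.coeff p 2) hquartic
  have hq1 := congrArg (fun p => Polynomial.coeff p 1) hquartic
  have hq0 := congrArg (fun p => Polynomial.coeff p 0) hquartic
  have hc2 := congrArg (fun p => Polynomial.coeff p 2) hcubic
  have hc1 := congrArg (fun p => Polynomial.coeff p 1) hcubic
  have hc0 := congrArg (fun p => Polynomial.coeff p 0) hcubic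
  simp only [coeff_add, coeff_sub, coeff_C_mul, coeff_X_pow, coeff_C, coeff_X] at hq3 hq2 hq1 hq0 hc2 hc1 hc0
  norm_num at hq3 hq2 hq1 hq0 hc2 hc1 hc0
  simp only [map_ofNat] at hq2 hq1 hq0
  have hS : (algebraMap F (AlgebraicClosure F)) s ^ 2 =
      -((algebraMap F (AlgebraicClosure F)) a0) := by
    have := congrArg (algebraMap F (AlgebraicClosure F)) hs
    simpa using this
  have h1 : r1 + r2 + r3 + r4 = 0 := by linear_combination hq3
  have hE2 : r1*r2 + r1*r3 + r1*r4 + r2*r3 + r2*r4 + r3*r4 =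
      2 * (algebraMap F (AlgebraicClosure F)) a2 := by linear_combination -hq2
  have hE3 : r1*r2*r3 + r1*r2*r4 + r1*r3*r4 + r2*r3*r4 =
      8 * (algebraMap F (AlgebraicClosure F)) s := by linear_combination hq1
  have hE4 : r1*r2*r3*r4 = (algebraMap F (AlgebraicClosure F)) a2 ^ 2 -
      4 * (algebraMap F (AlgebraicClosure F)) a1 := by linear_combination -hq0
  have hT1 : t1 + t2 + t3 = -((algebraMap F (AlgebraicClosure F)) a2) := by
    linear_combination hc2
  have hT2 : t1*t2 + t1*t3 + t2*t3 = (algebraMap F (AlgebraicClosure F)) a1 := hc1.symm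
  have hT3 : t1*t2*t3 = (algebraMap F (AlgebraicClosure F)) s ^ 2 := by
    linear_combination hc0 - hS
  rw [quartic_disc r1 r2 r3 r4 h1, cubic_disc t1 t2 t3, hE2, hE3, hE4, hT1, hT2, hT3]
  ring
end

section
/- Let k be a cubic field and let beta be a nonzero element of k. Then the norm N_{k/QQ}(beta) is a square in QQ if and only if there exists a nonzero element alpha of k with beta = alpha / N_{k/QQ}(alpha). -/
/-- Let `k` be a cubic field (a degree-3 extension of `ℚ`) and let
`β ∈ k` be nonzero.  Then `N_{k/ℚ}(β)` is a square in `ℚ` if and only if there is a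
nonzero `α ∈ k` with `β = α / N_{k/ℚ}(α)`. -/
theorem statement2 (k : Type*) [Field k] [Algebra ℚ k] [FiniteDimensional ℚ k]
    (h3 : Module.finrank ℚ k = 3) (β : k) (hβ : β ≠ 0) :
    IsSquare (Algebra.norm ℚ β) ↔
      ∃ α : k, α ≠ 0 ∧ β = α / algebraMap ℚ k (Algebra.norm ℚ α) := by
  haveI : CharZero k := charZero_of_injective_algebraMap (algebraMap ℚ k).injective
  have hNβ : Algebra.norm ℚ β ≠ 0 := (Algebra.norm_ne_zero_iff).mpr hβ
  constructor
  · rintro ⟨r, hr⟩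
    have hr0 : r ≠ 0 := by
      rintro rfl
      exact hNβ (by simpa using hr)
    have hc : algebraMap ℚ k r⁻¹ ≠ 0 := by
      simp only [ne_eq, map_eq_zero, inv_eq_zero]
      exact hr0
    refine ⟨algebraMap ℚ k r⁻¹ * β, mul_ne_zero hc hβ, ?_⟩
    have hN : Algebra.norm ℚ (algebraMap ℚ k r⁻¹ * β) = r⁻¹ ^ 3 * Algebra.norm ℚ β := by
      rw [map_mul, Algebra.norm_algebraMap, h3]
    rw [hN, hr]
    have hne : algebraMap ℚ k (r⁻¹ ^ 3 * (r * r)) ≠ 0 := by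
      simp only [ne_eq, map_eq_zero]
      positivity
    have hrk : (r : k) ≠ 0 := Rat.cast_ne_zero.mpr hr0
    rw [eq_div_iff hne, map_mul, map_pow, map_inv₀]
    push_cast
    field_simp
  · rintro ⟨α, hα0, rfl⟩
    have hNα : Algebra.norm ℚ α ≠ 0 := (Algebra.norm_ne_zero_iff).mpr hα0
    have hN : Algebra.norm ℚ (α / algebraMap ℚ k (Algebra.norm ℚ α)) =
        (Algebra.norm ℚ α)⁻¹ * (Algebra.norm ℚ α)⁻¹ := by
      rw [div_eq_mul_inv, ← map_inv₀ (algebraMap ℚ k), map_mul, Algebra.norm_algebraMap, h3]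
      field_simp
    rw [hN]
    exact ⟨(Algebra.norm ℚ α)⁻¹, rfl⟩
end

section
/- Let k be a cubic field and let c be a nonzero ideal of Z_k dividing 2*Z_k. Then the index z_k(c) = [Z_c : Z_c[N]] equals 1 if there exists beta in Z_k with N_{k/QQ}(beta) a square in QQ and beta ≡ -1 (mod c^2), and equals 2 otherwise. In particular, z_k(2*Z_k) = 2. -/
set_option maxHeartbeats 1000000
set_option synthInstance.maxHeartbeats 400000

open NumberField

/-- The subgroup `Z_c[N] ≤ Z_c = (𝓞 k / c²)ˣ` of classes having a lift to `𝓞 k`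
whose norm down to `ℚ` is a square.  The index `z_k(c) = [Z_c : Z_c[N]]` is
`(squareNormLift c).index`. -/
noncomputable def squareNormLift {k : Type*} [Field k] [NumberField k]
    (c : Ideal (𝓞 k)) : Subgroup ((𝓞 k ⧸ c ^ 2)ˣ) where
  carrier := {u | ∃ β : 𝓞 k, Ideal.Quotient.mk (c ^ 2) β = (u : 𝓞 k ⧸ c ^ 2) ∧
      IsSquare (Algebra.norm ℚ (algebraMap (𝓞 k) k β))}
  one_mem' := ⟨1, by simp, by simp⟩
  mul_mem' := by
    rintro u v ⟨β, hβ, sβ⟩ ⟨γ, hγ, sγ⟩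
    refine ⟨β * γ, ?_, ?_⟩
    · rw [map_mul, hβ, hγ, Units.val_mul]
    · rw [map_mul, map_mul]
      exact sβ.mul sγ
  inv_mem' := by
    rintro u ⟨β, hβ, sβ⟩
    obtain ⟨γ, hγ⟩ := Ideal.Quotient.mk_surjective ((u⁻¹ : (𝓞 k ⧸ c ^ 2)ˣ) : 𝓞 k ⧸ c ^ 2)
    refine ⟨β * γ ^ 2, ?_, ?_⟩
    · rw [map_mul, map_pow, hβ, hγ, ← Units.val_pow_eq_pow_val, ← Units.val_mul]
      congr 1
      group
    · rw [map_mul, map_mul, map_pow, map_pow]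
      exact sβ.mul ⟨Algebra.norm ℚ (algebraMap (𝓞 k) k γ), (sq _)⟩

/-! Lifting `u ∈ (𝓞 k ⧸ c²)ˣ` to a unit modulo `4` gives a lift `β` of odd norm `n`. In a cubic
field `β` divides `n` and the cofactor `γ = n / β` has norm `n²`, a square; since `n ≡ ±1 mod 4`
and `4 ∈ c²`, `γ` lifts `±u⁻¹`. Hence `Z_c[N]` and `-Z_c[N]` cover `Z_c`, and the index is `1` or
`2` according as `-1 ∈ Z_c[N]`. For `c = 2`, any `β ≡ -1 mod 4` has norm `≡ N(-1) = -1 mod 4`,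
which is not a square. -/

theorem exists_isIdempotentElem_pow {M : Type*} [Monoid M] [Finite M] (a : M) :
    ∃ n ≠ 0, IsIdempotentElem (a ^ n) := by
  obtain ⟨i, j, hij, hpow⟩ := Finite.exists_ne_map_eq_of_infinite (fun n : ℕ => a ^ n)
  wlog hlt : i < j generalizing i j
  · exact this j i hij.symm hpow.symm (by omega)
  obtain ⟨d, rfl⟩ : ∃ d, j = i + (d + 1) := ⟨j - i - 1, by omega⟩
  have periodic : ∀ t s, i ≤ s → a ^ (s + t * (d + 1)) = a ^ s := by
    intro t
    induction t with
    | zero => simp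
    | succ t ih =>
      intro s hs
      obtain ⟨r, rfl⟩ : ∃ r, s = i + r := ⟨s - i, by omega⟩
      rw [show i + r + (t + 1) * (d + 1) = (i + (d + 1)) + (r + t * (d + 1)) by ring, pow_add,
        ← hpow, ← pow_add, show i + (r + t * (d + 1)) = i + r + t * (d + 1) by ring, ih _ hs]
  refine ⟨(i + 1) * (d + 1), by positivity, ?_⟩
  rw [IsIdempotentElem, ← pow_add, periodic _ _ (by nlinarith)]

theorem Units.map_surjective_of_finite {A B : Type*} [CommRing A] [Finite A] [CommRing B]
    (f : A →+* B) (hf : Function.Surjective f) :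
    Function.Surjective (Units.map (f : A →* B)) := by
  have : Finite B := Finite.of_surjective f hf
  intro u
  obtain ⟨a, ha⟩ := hf u
  obtain ⟨n, hn, he⟩ := exists_isIdempotentElem_pow a
  set m := n * Nat.card Bˣ
  have hm : m ≠ 0 := mul_ne_zero hn Nat.card_pos.ne'
  have ham : a ^ m = a ^ n := by rw [pow_mul, he.pow_eq Nat.card_pos.ne']
  have hfm : f (a ^ n) = 1 := by
    rw [← ham, map_pow, ha, ← Units.val_pow_eq_pow_val, pow_mul', pow_card_eq_one', one_pow,
      Units.val_one]
  -- `a` is invertible on the idempotent `a ^ n` and is replaced by `1` off it.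
  set e := a ^ n
  have hinv : (a * e + (1 - e)) * (a ^ (m - 1) * e + (1 - e)) = 1 := by
    have ha' : a * a ^ (m - 1) = e := by rw [← pow_succ', Nat.sub_add_cancel (by omega), ham]
    have he' : e * e = e := he
    linear_combination (e + 2 - a - a ^ (m - 1)) * he' + e ^ 2 * ha'
  refine ⟨Units.mkOfMulEqOne _ _ hinv, Units.ext ?_⟩
  simp [hfm, ha]

namespace Algebra

variable {R S : Type*} [CommRing R] [CommRing S] [Algebra R S] [Module.Free R S]
  [Module.Finite R S]

theorem dvd_algebraMap_norm (x : S) : x ∣ algebraMap R S (norm R x) := by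
  set p := (lmul R S x).charpoly
  have hp : Polynomial.aeval x p = 0 := by
    have h := Polynomial.aeval_algHom_apply (lmul R S) x p
    rw [LinearMap.aeval_self_charpoly] at h
    simpa using (congrArg (· 1) h).symm
  obtain ⟨q, hq⟩ := Polynomial.X_dvd_sub_C (p := p)
  have hx : x ∣ algebraMap R S (p.coeff 0) :=
    ⟨-Polynomial.aeval x q, by
      simpa [hp, neg_eq_iff_eq_neg] using congrArg (Polynomial.aeval x) hq⟩
  rw [norm_apply, LinearMap.det_eq_sign_charpoly_coeff, map_mul]
  exact hx.mul_left _

theorem norm_sub_norm_mem_span_singleton {x y : S} {r : R}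
    (h : x - y ∈ Ideal.span {algebraMap R S r}) : norm R x - norm R y ∈ Ideal.span {r} := by
  classical
  obtain ⟨w, hw⟩ := Ideal.mem_span_singleton'.mp h
  rw [eq_sub_iff_add_eq, mul_comm, ← Algebra.smul_def] at hw
  let b := Module.Free.chooseBasis R S
  rw [← Ideal.Quotient.eq, norm_eq_matrix_det b, norm_eq_matrix_det b, ← hw,
    RingHom.map_det, RingHom.map_det]
  congr 1
  ext i j
  simp [Ideal.Quotient.eq_zero_iff_mem.mpr (Ideal.mem_span_singleton_self r)]

end Algebra

namespace Subgroup

variable {G : Type*} [Group G] {H : Subgroup G} {z : G}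

theorem index_eq_one_of_forall_mem_or_mul_mem (hz : z ∈ H) (h : ∀ g, g ∈ H ∨ g * z ∈ H) :
    H.index = 1 := by
  refine index_eq_one.mpr (eq_top_iff.mpr fun g _ => (h g).elim id fun hgz => ?_)
  simpa using H.mul_mem hgz (H.inv_mem hz)

theorem index_eq_two_of_forall_mem_or_mul_mem (hz : z ∉ H) (h : ∀ g, g ∈ H ∨ g * z ∈ H) :
    H.index = 2 := by
  refine index_eq_two_iff.mpr ⟨z, fun g => ?_⟩
  rcases h g with hg | hgz
  · exact Or.inr ⟨hg, fun hgz => hz (by simpa using H.mul_mem (H.inv_mem hg) hgz)⟩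
  · exact Or.inl ⟨hgz, fun hg => hz (by simpa using H.mul_mem (H.inv_mem hg) hgz)⟩

end Subgroup

theorem mk_intCast_eq_one_or_neg_one {R : Type*} [CommRing R] {c : Ideal R}
    (hc : c ∣ Ideal.span {(2 : R)}) {n : ℤ} (hn : ¬ 2 ∣ n) :
    Ideal.Quotient.mk (c ^ 2) (n : R) = 1 ∨ Ideal.Quotient.mk (c ^ 2) (n : R) = -1 := by
  have h4 : ∀ m : ℤ, 4 ∣ m → (m : R) ∈ c ^ 2 := by
    rintro _ ⟨t, rfl⟩
    push_cast
    refine Ideal.mul_mem_right _ _ (Ideal.le_of_dvd (pow_dvd_pow_of_dvd hc 2) ?_)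
    rw [Ideal.span_singleton_pow]
    exact Ideal.mem_span_singleton.mpr (by norm_num)
  rcases (by omega : 4 ∣ n - 1 ∨ 4 ∣ n + 1) with h | h
  · left
    rw [← map_one (Ideal.Quotient.mk _), Ideal.Quotient.eq]
    exact_mod_cast h4 _ h
  · right
    rw [← map_one (Ideal.Quotient.mk _), ← map_neg, Ideal.Quotient.eq, sub_neg_eq_add]
    exact_mod_cast h4 _ h

section CubicField

variable {k : Type*} [Field k] [NumberField k]

theorem isSquare_norm_iff (x : 𝓞 k) :
    IsSquare (Algebra.norm ℚ (algebraMap (𝓞 k) k x)) ↔ IsSquare (Algebra.norm ℤ x) := by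
  rw [show algebraMap (𝓞 k) k x = (x : k) from rfl, ← Algebra.coe_norm_int,
    Rat.isSquare_intCast_iff]

theorem norm_intCast_of_finrank_eq_three (h3 : Module.finrank ℚ k = 3) (n : ℤ) :
    Algebra.norm ℤ (n : 𝓞 k) = n ^ 3 := by
  rw [← eq_intCast (algebraMap ℤ (𝓞 k)), Algebra.norm_algebraMap, RingOfIntegers.rank, h3]

theorem norm_eq_sq_of_mul_eq_norm (h3 : Module.finrank ℚ k = 3) {β γ : 𝓞 k}
    (hβγ : β * γ = (Algebra.norm ℤ β : 𝓞 k)) (hβ : Algebra.norm ℤ β ≠ 0) :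
    Algebra.norm ℤ γ = Algebra.norm ℤ β ^ 2 := by
  have h := congrArg (Algebra.norm ℤ) hβγ
  rw [map_mul, norm_intCast_of_finrank_eq_three h3] at h
  exact mul_left_cancel₀ hβ (by rw [h]; ring)

theorem exists_lift_not_two_dvd_norm {c : Ideal (𝓞 k)} (hc : c ∣ Ideal.span {(2 : 𝓞 k)})
    (u : (𝓞 k ⧸ c ^ 2)ˣ) :
    ∃ β : 𝓞 k, Ideal.Quotient.mk (c ^ 2) β = u ∧ ¬ 2 ∣ Algebra.norm ℤ β := by
  set I := Ideal.span {(2 : 𝓞 k)} ^ 2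
  have hI : I ≤ c ^ 2 := Ideal.le_of_dvd (pow_dvd_pow_of_dvd hc 2)
  have : Finite (𝓞 k ⧸ I) :=
    Ideal.finiteQuotientOfFreeOfNeBot I (pow_ne_zero _ (by simp))
  obtain ⟨v, hv⟩ := Units.map_surjective_of_finite (Ideal.Quotient.factor hI)
    (Ideal.Quotient.factor_surjective hI) u
  obtain ⟨β, hβ⟩ := Ideal.Quotient.mk_surjective (v : 𝓞 k ⧸ I)
  obtain ⟨β', hβ'⟩ := Ideal.Quotient.mk_surjective (↑v⁻¹ : 𝓞 k ⧸ I)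
  refine ⟨β, by rw [← Ideal.Quotient.factor_mk hI, hβ]; exact congrArg Units.val hv, ?_⟩
  have hunit : β * β' - 1 ∈ Ideal.span {(2 : 𝓞 k)} := Ideal.pow_le_self two_ne_zero
    (Ideal.Quotient.eq.mp (by rw [map_mul, hβ, hβ', map_one, Units.mul_inv]))
  rw [show (2 : 𝓞 k) = algebraMap ℤ (𝓞 k) 2 by simp] at hunit
  have hnorm := Algebra.norm_sub_norm_mem_span_singleton hunit
  rw [map_mul, map_one, Ideal.mem_span_singleton] at hnorm
  intro h2
  have := dvd_mul_of_dvd_left h2 (Algebra.norm ℤ β')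
  omega

theorem mem_or_mul_neg_one_mem_squareNormLift (h3 : Module.finrank ℚ k = 3)
    {c : Ideal (𝓞 k)} (hc : c ∣ Ideal.span {(2 : 𝓞 k)}) (u : (𝓞 k ⧸ c ^ 2)ˣ) :
    u ∈ squareNormLift c ∨ u * -1 ∈ squareNormLift c := by
  obtain ⟨β, hβ, hodd⟩ := exists_lift_not_two_dvd_norm hc u
  obtain ⟨γ, hγ⟩ := Algebra.dvd_algebraMap_norm (R := ℤ) β
  rw [eq_intCast] at hγ
  have hγsq : IsSquare (Algebra.norm ℚ (algebraMap (𝓞 k) k γ)) := by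
    rw [isSquare_norm_iff, norm_eq_sq_of_mul_eq_norm h3 hγ.symm (by rintro h; simp [h] at hodd)]
    exact IsSquare.sq _
  have hu : (u : 𝓞 k ⧸ c ^ 2) * Ideal.Quotient.mk (c ^ 2) γ = Ideal.Quotient.mk (c ^ 2)
      (Algebra.norm ℤ β : 𝓞 k) := by rw [hγ, map_mul, hβ]
  rcases mk_intCast_eq_one_or_neg_one hc hodd with h | h <;> rw [h] at hu
  · refine Or.inl (inv_mem_iff.mp ⟨γ, ?_, hγsq⟩)
    rw [← Units.inv_mul_cancel_left u (Ideal.Quotient.mk _ γ), hu, mul_one]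
  · refine Or.inr (inv_mem_iff.mp ⟨γ, ?_, hγsq⟩)
    rw [← Units.inv_mul_cancel_left u (Ideal.Quotient.mk _ γ), hu]
    simp

theorem neg_one_mem_squareNormLift_iff (c : Ideal (𝓞 k)) :
    (-1 : (𝓞 k ⧸ c ^ 2)ˣ) ∈ squareNormLift c ↔
      ∃ β : 𝓞 k, IsSquare (Algebra.norm ℚ (algebraMap (𝓞 k) k β)) ∧ β + 1 ∈ c ^ 2 := by
  refine exists_congr fun β => ?_
  rw [and_comm, Units.val_neg, Units.val_one, ← map_one (Ideal.Quotient.mk _), ← map_neg,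
    Ideal.Quotient.eq, sub_neg_eq_add]

theorem neg_one_notMem_squareNormLift_two (h3 : Module.finrank ℚ k = 3) :
    (-1 : (𝓞 k ⧸ Ideal.span {(2 : 𝓞 k)} ^ 2)ˣ) ∉ squareNormLift (Ideal.span {(2 : 𝓞 k)}) := by
  rw [neg_one_mem_squareNormLift_iff]
  rintro ⟨β, hsq, hβ⟩
  obtain ⟨s, hs⟩ := (isSquare_norm_iff β).mp hsq
  have h4 : Ideal.span {(2 : 𝓞 k)} ^ 2 = Ideal.span {algebraMap ℤ (𝓞 k) 4} := by
    rw [Ideal.span_singleton_pow, map_ofNat]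
    norm_num
  rw [h4, ← sub_neg_eq_add, ← Int.cast_one, ← Int.cast_neg] at hβ
  have hnorm := Algebra.norm_sub_norm_mem_span_singleton hβ
  rw [hs, norm_intCast_of_finrank_eq_three h3, Ideal.mem_span_singleton] at hnorm
  have hmod := (ZMod.intCast_zmod_eq_zero_iff_dvd _ 4).mpr hnorm
  push_cast at hmod
  generalize (s : ZMod 4) = a at hmod
  revert a
  decide

end CubicField

theorem statement4_general (k : Type*) [Field k] [NumberField k]
    (h3 : Module.finrank ℚ k = 3)
    (c : Ideal (𝓞 k)) (hc : c ∣ Ideal.span {(2 : 𝓞 k)}) :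
    ((∃ β : 𝓞 k, IsSquare (Algebra.norm ℚ (algebraMap (𝓞 k) k β)) ∧ β + 1 ∈ c ^ 2) →
        (squareNormLift c).index = 1) ∧
    ((¬ ∃ β : 𝓞 k, IsSquare (Algebra.norm ℚ (algebraMap (𝓞 k) k β)) ∧ β + 1 ∈ c ^ 2) →
        (squareNormLift c).index = 2) ∧
    (squareNormLift (Ideal.span {(2 : 𝓞 k)})).index = 2 := by
  have cover := mem_or_mul_neg_one_mem_squareNormLift h3 hc
  refine ⟨fun h => ?_, fun h => ?_, ?_⟩
  · exact Subgroup.index_eq_one_of_forall_mem_or_mul_mem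
      ((neg_one_mem_squareNormLift_iff c).mpr h) cover
  · exact Subgroup.index_eq_two_of_forall_mem_or_mul_mem
      (mt (neg_one_mem_squareNormLift_iff c).mp h) cover
  · exact Subgroup.index_eq_two_of_forall_mem_or_mul_mem (neg_one_notMem_squareNormLift_two h3)
      (mem_or_mul_neg_one_mem_squareNormLift h3 dvd_rfl)

/-- Let `k` be a cubic field and `c` a nonzero ideal of `𝓞 k` dividing
`2 𝓞 k`.  Then `z_k(c) = [Z_c : Z_c[N]]` equals `1` if there is `β ∈ 𝓞 k` of square
norm with `β ≡ -1 (mod c²)`, and equals `2` otherwise.  In particular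
`z_k(2 𝓞 k) = 2`. -/
theorem statement4 (k : Type*) [Field k] [NumberField k]
    (h3 : Module.finrank ℚ k = 3)
    (c : Ideal (𝓞 k)) (hc0 : c ≠ ⊥) (hc : c ∣ Ideal.span {(2 : 𝓞 k)}) :
    ((∃ β : 𝓞 k, IsSquare (Algebra.norm ℚ (algebraMap (𝓞 k) k β)) ∧ β + 1 ∈ c ^ 2) →
        (squareNormLift c).index = 1) ∧
    ((¬ ∃ β : 𝓞 k, IsSquare (Algebra.norm ℚ (algebraMap (𝓞 k) k β)) ∧ β + 1 ∈ c ^ 2) →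
        (squareNormLift c).index = 2) ∧
    (squareNormLift (Ideal.span {(2 : 𝓞 k)})).index = 2 :=
  statement4_general k h3 c hc
end

section
/- Let k be a cubic field and let a be a nonzero fractional ideal of k whose absolute norm N(a) is a square in QQ. Then there exists delta in k^* with N_{k/QQ}(delta) a square in QQ such that the fractional ideal delta*a is coprime to 2, i.e., v_p(delta*a) = 0 for every prime ideal p of Z_k dividing 2*Z_k. -/
/-!
Write `a⁻¹ = e⁻¹ J` with `J` integral and choose `x` with `2J + (x) = J`; then `(x) = J c` with
`c + (2) = 1`, and `δ₀ = x / e` gives `δ₀ a = c` integral and prime to `2`. Taking norms,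
`|N(δ₀)| r² = N(c)` where `N(a) = r²`, and `N(c) = #(𝓞 k ⧸ c)` is odd because `2` is a unit
modulo `c`. Hence `q = N(δ₀) r² = ±N(c)` is an odd integer, `δ = q δ₀` still satisfies
`δ a = q c` prime to `2`, and `N(δ) = q³ N(δ₀) = q² (N(δ₀) r)²` is a square.
-/

open NumberField FractionalIdeal
open scoped nonZeroDivisors

theorem Ideal.coprime_card_quotient_of_isCoprime_span_natCast {R : Type*} [CommRing R]
    {I : Ideal R} [Finite (R ⧸ I)] {n : ℕ} (h : IsCoprime I (Ideal.span {(n : R)})) :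
    (Nat.card (R ⧸ I)).Coprime n := by
  obtain ⟨i, hi, j, hj, hij⟩ := h.exists
  obtain ⟨r, rfl⟩ := Ideal.mem_span_singleton'.mp hj
  have hn : IsUnit (n : R ⧸ I) := by
    refine IsUnit.of_mul_eq_one (Ideal.Quotient.mk I r) ?_
    simpa [Ideal.Quotient.eq_zero_iff_mem.mpr hi, mul_comm] using
      congrArg (Ideal.Quotient.mk I) hij
  refine Nat.coprime_of_dvd fun q hq hqcard hqn => ?_
  have : Fact q.Prime := ⟨hq⟩
  obtain ⟨x, hx⟩ := exists_prime_addOrderOf_dvd_card' q hqcard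
  have hqx : (q : R ⧸ I) * x = 0 := by rw [← nsmul_eq_mul, ← hx, addOrderOf_nsmul_eq_zero]
  have hx0 : x = 0 := ((isUnit_of_dvd_unit (Nat.cast_dvd_cast hqn) hn).mul_right_eq_zero).mp hqx
  exact hq.one_lt.ne' (by rw [← hx, hx0, addOrderOf_zero])

theorem IsDedekindDomain.exists_span_singleton_eq_mul_isCoprime {R : Type*} [CommRing R]
    [IsDedekindDomain R] {J M : Ideal R} (hJ : J ≠ ⊥) (hM : M ≠ ⊥) :
    ∃ x : R, x ≠ 0 ∧ ∃ c : Ideal R, IsCoprime c M ∧ Ideal.span {x} = J * c := by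
  obtain ⟨x, hx⟩ := exists_sup_span_eq (Ideal.mul_le_left : J * M ≤ J) (mul_ne_zero hJ hM)
  obtain ⟨c, hc⟩ := Ideal.dvd_iff_le.mpr (hx ▸ le_sup_right : Ideal.span {x} ≤ J)
  have hcM : IsCoprime c M := by
    rw [Ideal.isCoprime_iff_sup_eq, sup_comm]
    apply mul_left_cancel₀ hJ
    rw [Ideal.mul_sup, ← hc, hx, Ideal.mul_top]
  by_cases hx0 : x = 0
  · have hc0 : c = ⊥ := by simpa [hx0, hJ] using hc.symm
    rw [hc0, ← Ideal.zero_eq_bot, isCoprime_zero_left, Ideal.isUnit_iff] at hcM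
    obtain ⟨y, hyJ, hy0⟩ := Submodule.exists_mem_ne_zero_of_ne_bot hJ
    obtain ⟨c', hc'⟩ := Ideal.dvd_iff_le.mpr ((Ideal.span_singleton_le_iff_mem _).mpr hyJ)
    exact ⟨y, hy0, c', by rw [hcM, Ideal.isCoprime_iff_sup_eq, sup_top_eq], hc'⟩
  · exact ⟨x, hx0, c, hcM, hc⟩

theorem FractionalIdeal.exists_spanSingleton_mul_eq_coeIdeal_isCoprime {R K : Type*}
    [CommRing R] [IsDedekindDomain R] [Field K] [Algebra R K] [IsFractionRing R K]
    {M : Ideal R} (hM : M ≠ ⊥) {a : FractionalIdeal R⁰ K} (ha : a ≠ 0) :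
    ∃ δ : K, δ ≠ 0 ∧ ∃ c : Ideal R, IsCoprime c M ∧ spanSingleton R⁰ δ * a = c := by
  obtain ⟨e, J, he, hJ⟩ := exists_eq_spanSingleton_mul a⁻¹
  have hJ0 : J ≠ ⊥ := by
    rintro rfl
    simp [ha] at hJ
  obtain ⟨x, hx, c, hcM, hxc⟩ := IsDedekindDomain.exists_span_singleton_eq_mul_isCoprime hJ0 hM
  refine ⟨algebraMap R K x * (algebraMap R K e)⁻¹, by simp [hx, he], c, hcM, ?_⟩
  rw [← spanSingleton_mul_spanSingleton, ← coeIdeal_span_singleton, hxc, coeIdeal_mul,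
    mul_right_comm (J : FractionalIdeal R⁰ K), mul_comm (J : FractionalIdeal R⁰ K), ← hJ,
    mul_right_comm, inv_mul_cancel₀ ha, one_mul]

theorem Ideal.absNorm_coprime_of_isCoprime_span_natCast {S : Type*} [CommRing S]
    [IsDedekindDomain S] [Module.Free ℤ S] [Module.Finite ℤ S] {c : Ideal S} (hc : c ≠ ⊥)
    {n : ℕ} (h : IsCoprime c (Ideal.span {(n : S)})) : (absNorm c).Coprime n := by
  have := c.finiteQuotientOfFreeOfNeBot hc
  rw [absNorm_apply, Submodule.cardQuot_apply]
  exact coprime_card_quotient_of_isCoprime_span_natCast h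

theorem Algebra.isSquare_norm_algebraMap_mul {F L : Type*} [Field F] [Field L] [Algebra F L]
    (hL : Odd (Module.finrank F L)) {q : F} {x : L} (h : IsSquare (q * Algebra.norm F x)) :
    IsSquare (Algebra.norm F (algebraMap F L q * x)) := by
  obtain ⟨k, hk⟩ := hL
  obtain ⟨s, hs⟩ := h
  refine ⟨q ^ k * s, ?_⟩
  rw [map_mul, Algebra.norm_algebraMap, hk, pow_succ, mul_assoc, hs]
  ring

theorem NumberField.exists_isSquare_norm_spanSingleton_mul_eq_isCoprime {K : Type*} [Field K]
    [NumberField K] (hK : Odd (Module.finrank ℚ K)) {n : ℕ} (hn : n ≠ 0)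
    {a : FractionalIdeal (𝓞 K)⁰ K} (ha : a ≠ 0) (hsq : IsSquare (absNorm a)) :
    ∃ δ : K, δ ≠ 0 ∧ IsSquare (Algebra.norm ℚ δ) ∧ ∃ b : Ideal (𝓞 K),
      IsCoprime b (Ideal.span {(n : 𝓞 K)}) ∧ spanSingleton (𝓞 K)⁰ δ * a = b := by
  have hM : Ideal.span {(n : 𝓞 K)} ≠ ⊥ := by simpa using hn
  obtain ⟨δ₀, hδ₀, c, hc, hδ₀a⟩ := exists_spanSingleton_mul_eq_coeIdeal_isCoprime hM ha
  obtain ⟨r, hr⟩ := hsq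
  have hr0 : r ≠ 0 := by
    rintro rfl
    simp [ha] at hr
  have hc0 : c ≠ ⊥ := by
    rintro rfl
    simp [spanSingleton_eq_zero_iff, hδ₀, ha] at hδ₀a
  set q := Algebra.norm ℚ δ₀ * (r * r)
  have hq : |q| = Ideal.absNorm c := by
    rw [abs_mul, abs_mul_self, ← hr, ← absNorm_span_singleton (𝓞 K), ← map_mul, hδ₀a,
      coeIdeal_absNorm]
  obtain ⟨m, hqm, hmn⟩ : ∃ m : ℤ, q = m ∧ IsCoprime m n := by
    have hcn := Nat.isCoprime_iff_coprime.mpr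
      (Ideal.absNorm_coprime_of_isCoprime_span_natCast hc0 hc)
    rcases (abs_eq (Nat.cast_nonneg _)).mp hq with h | h
    · exact ⟨Ideal.absNorm c, by simp [h], hcn⟩
    · exact ⟨-Ideal.absNorm c, by simp [h], hcn.neg_left⟩
  refine ⟨algebraMap ℚ K q * δ₀, ?_, ?_, Ideal.span {(m : 𝓞 K)} * c, ?_, ?_⟩
  · simp [q, hδ₀, hr0]
  · exact Algebra.isSquare_norm_algebraMap_mul hK ⟨Algebra.norm ℚ δ₀ * r, by ring⟩
  · have hmn' : IsCoprime (m : 𝓞 K) (n : 𝓞 K) := by exact_mod_cast hmn.intCast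
    exact ((Ideal.isCoprime_span_singleton_iff _ _).mpr hmn').mul_left hc
  · rw [← spanSingleton_mul_spanSingleton, mul_assoc, hδ₀a, coeIdeal_mul,
      coeIdeal_span_singleton, hqm]
    simp

/-- Let `k` be a cubic field and `a` a nonzero fractional ideal of `k`
whose absolute norm is a square in `ℚ`.  Then there is `δ ∈ k*` of square norm such
that `δ·a` is coprime to `2`, i.e. `δ·a = b/c` with `b, c` integral ideals coprime to
`2𝓞 k` (equivalently, `v_p(δ·a) = 0` for all primes `p ∣ 2𝓞 k`). -/
theorem statement18 (k : Type*) [Field k] [NumberField k]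
    (h3 : Module.finrank ℚ k = 3)
    (a : FractionalIdeal (𝓞 k)⁰ k) (ha : a ≠ 0)
    (hsq : IsSquare (FractionalIdeal.absNorm a)) :
    ∃ δ : k, δ ≠ 0 ∧ IsSquare (Algebra.norm ℚ δ) ∧
      ∃ b c : Ideal (𝓞 k),
        IsCoprime b (Ideal.span {(2 : 𝓞 k)}) ∧
        IsCoprime c (Ideal.span {(2 : 𝓞 k)}) ∧
        spanSingleton (𝓞 k)⁰ δ * a =
          (b : FractionalIdeal (𝓞 k)⁰ k) / (c : FractionalIdeal (𝓞 k)⁰ k) := by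
  obtain ⟨δ, hδ, hδsq, b, hb, hδa⟩ := exists_isSquare_norm_spanSingleton_mul_eq_isCoprime
    (by rw [h3]; decide) two_ne_zero ha hsq
  refine ⟨δ, hδ, hδsq, b, ⊤, by exact_mod_cast hb, ?_, ?_⟩
  · rw [Ideal.isCoprime_iff_sup_eq, top_sup_eq]
  · rw [hδa, coeIdeal_top, FractionalIdeal.div_one]
end
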